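/- Let k, N be natural numbers with 1 ≤ k < N, n := N − k, and assume kn ≥ 4. Then in Λ(V): Σ_{i=1}^{k} Σ_{j=1}^{k} (tr Φ)^{kn−4} ∧ ω^{ii} ∧ ω^{ii} ∧ ω^{jj} ∧ ω^{jj} = (kn−4)! · k · n · [(n−1)(n−2)(n−3) + (k−1)·n·(n−1)²] · T. (This is the evaluation of Q₁ = Σ_{i,j} ∫Dψ (tr Φ)^{kN−k²−4} (ω^{ii} ω^{jj})².) -/

import Mathlib

noncomputable section

/-- The real vector space with basis `ψ_s^j` (inl) and `ψ̄_s^j` (inr),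
    `1 ≤ s ≤ n`, `1 ≤ j ≤ k`. -/
abbrev V (k n : ℕ) : Type := ((Fin n × Fin k) ⊕ (Fin n × Fin k)) → ℝ

/-- The fermionic variable `ψ_s^j` as a degree-1 element of the exterior algebra. -/
def ψ (k n : ℕ) (s : Fin n) (j : Fin k) : ExteriorAlgebra ℝ (V k n) :=
  ExteriorAlgebra.ι ℝ (Pi.single (Sum.inl (s, j)) (1 : ℝ))

/-- The fermionic variable `ψ̄_s^j` as a degree-1 element of the exterior algebra. -/
def ψb (k n : ℕ) (s : Fin n) (j : Fin k) : ExteriorAlgebra ℝ (V k n) :=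
  ExteriorAlgebra.ι ℝ (Pi.single (Sum.inr (s, j)) (1 : ℝ))

/-- `ω^{ij} = ∑_{s=1}^n ψ_s^i ∧ ψ̄_s^j`. -/
def ω (k n : ℕ) (i j : Fin k) : ExteriorAlgebra ℝ (V k n) :=
  ∑ s : Fin n, ψ k n s i * ψb k n s j

/-- `tr Φ = ∑_{i=1}^k ω^{ii}`. -/
def trPhi (k n : ℕ) : ExteriorAlgebra ℝ (V k n) :=
  ∑ i : Fin k, ω k n i i

/-- `tr(Φ²) = ∑_{i,j=1}^k ω^{ij} ∧ ω^{ji}`. -/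
def trPhi2 (k n : ℕ) : ExteriorAlgebra ℝ (V k n) :=
  ∑ i : Fin k, ∑ j : Fin k, ω k n i j * ω k n j i

/-- The top-degree generator `T = ∧_{s=1}^n (ψ_s^1 ∧ ψ̄_s^1 ∧ ⋯ ∧ ψ_s^k ∧ ψ̄_s^k)`. -/
def T (k n : ℕ) : ExteriorAlgebra ℝ (V k n) :=
  ((List.finRange n).map (fun s =>
    ((List.finRange k).map (fun j => ψ k n s j * ψb k n s j)).prod)).prod

/-!
The degree-two elements `e_a = ψ_a ∧ ψ̄_a`, `a = (s, j)`, commute and square to zero, so they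
generate a commutative subalgebra in which `(∑_{a ∈ S} e_a)^m = m! ∑_{U ⊆ S, |U| = m} e_U`.
Since `tr Φ = ∑_a e_a`, this gives `(tr Φ)^{kn-4} e_U = (kn-4)! T` for every 4-set `U`. Expanding
`(ω^{ii})⁴ = 4! ∑_{|U| = 4} e_{U × {i}}` and, for `i ≠ j`,
`(ω^{ii})² (ω^{jj})² = (2!)² ∑_{|U| = |W| = 2} e_{U × {i}} e_{W × {j}}` then leaves the counts
`4! C(n,4) = n(n-1)(n-2)(n-3)` and `(2! C(n,2))² = n²(n-1)²`.
-/

open Finset Nat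

section SquareZero

variable {ι R : Type*} [CommSemiring R] {e : ι → R}

theorem add_pow_succ_of_mul_self_eq_zero {x : R} (hx : x * x = 0) (y : R) (m : ℕ) :
    (x + y) ^ (m + 1) = y ^ (m + 1) + (m + 1) • (x * y ^ m) := by
  induction m with
  | zero => simp [add_comm]
  | succ m ih =>
    have hxx : (m + 1) • (x * y ^ m) * x = 0 := by
      rw [smul_mul_assoc, mul_right_comm, hx, zero_mul, smul_zero]
    rw [pow_succ, ih, add_mul, mul_add, mul_add, hxx]
    ring

theorem sum_pow_eq_factorial_nsmul_sum_powersetCard (he : ∀ a, e a * e a = 0)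
    (s : Finset ι) (m : ℕ) :
    (∑ a ∈ s, e a) ^ m = m ! • ∑ U ∈ s.powersetCard m, ∏ a ∈ U, e a := by
  classical
  induction s using Finset.induction_on generalizing m with
  | empty =>
    cases m with
    | zero => simp
    | succ m => rw [powersetCard_eq_empty.2 (by simp)]; simp
  | insert a s ha ih =>
    cases m with
    | zero => simp
    | succ m =>
      have hdisj : Disjoint (s.powersetCard (m + 1)) ((s.powersetCard m).image (insert a)) := by
        simp only [disjoint_left, mem_image, mem_powersetCard]
        rintro _ ⟨hU, -⟩ ⟨W, -, rfl⟩
        exact ha (hU (mem_insert_self a W))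
      have hinj : Set.InjOn (insert a) (s.powersetCard m : Set (Finset ι)) :=
        fun U hU W hW h => by
          rw [← erase_insert fun haU => ha (mem_powersetCard.1 hU |>.1 haU), h,
            erase_insert fun haW => ha (mem_powersetCard.1 hW |>.1 haW)]
      have hprod : ∀ U ∈ s.powersetCard m, ∏ b ∈ insert a U, e b = e a * ∏ b ∈ U, e b :=
        fun U hU => prod_insert fun haU => ha (mem_powersetCard.1 hU |>.1 haU)
      rw [sum_insert ha, add_pow_succ_of_mul_self_eq_zero (he a), ih, ih,
        powersetCard_succ_insert ha, sum_union hdisj, sum_image hinj, sum_congr rfl hprod,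
        mul_smul_comm, mul_sum, smul_add, factorial_succ, mul_smul, mul_smul]

theorem prod_mul_prod_eq_zero_of_not_disjoint (he : ∀ a, e a * e a = 0) {U W : Finset ι}
    (h : ¬ Disjoint U W) : (∏ a ∈ U, e a) * ∏ a ∈ W, e a = 0 := by
  classical
  obtain ⟨a, haU, haW⟩ := not_disjoint_iff.1 h
  rw [← mul_prod_erase U e haU, ← mul_prod_erase W e haW, mul_mul_mul_comm, he, zero_mul]

theorem sum_pow_mul_prod_eq_factorial_nsmul_prod [Fintype ι] (he : ∀ a, e a * e a = 0)
    {p : ℕ} {U : Finset ι} (hp : p + #U = Fintype.card ι) :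
    (∑ a, e a) ^ p * ∏ a ∈ U, e a = p ! • ∏ a, e a := by
  classical
  have hUc : Uᶜ ∈ univ.powersetCard p := by
    rw [mem_powersetCard, card_compl]; exact ⟨subset_univ _, by omega⟩
  rw [sum_pow_eq_factorial_nsmul_sum_powersetCard he, smul_mul_assoc, sum_mul,
    sum_eq_single_of_mem _ hUc, prod_compl_mul_prod]
  intro W hW hWU
  refine prod_mul_prod_eq_zero_of_not_disjoint he fun hdisj => hWU ?_
  rw [mem_powersetCard] at hW hUc
  exact eq_of_subset_of_card_le (le_compl_iff_disjoint_right.2 hdisj) (by omega)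

end SquareZero

section Columns

variable {σ κ R : Type*} [Fintype σ] [Fintype κ] [CommSemiring R] {e : σ × κ → R}

omit [Fintype σ] [Fintype κ] in
theorem prod_eq_prod_map_sectL (U : Finset σ) (i : κ) :
    ∏ s ∈ U, e (s, i) = ∏ a ∈ U.map (Function.Embedding.sectL σ i), e a :=
  (prod_map U (Function.Embedding.sectL σ i) e).symm

theorem sum_pow_mul_sum_column_pow_four (he : ∀ a, e a * e a = 0) {p : ℕ}
    (hp : p + 4 = Fintype.card σ * Fintype.card κ) (i : κ) :
    (∑ a, e a) ^ p * (∑ s, e (s, i)) ^ 4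
      = ((Fintype.card σ).descFactorial 4 * p !) • ∏ a, e a := by
  have hterm : ∀ U ∈ univ.powersetCard 4,
      (∑ a, e a) ^ p * ∏ s ∈ U, e (s, i) = p ! • ∏ a, e a := by
    intro U hU
    rw [prod_eq_prod_map_sectL]
    refine sum_pow_mul_prod_eq_factorial_nsmul_prod he ?_
    rw [card_map, (mem_powersetCard.1 hU).2, hp, Fintype.card_prod]
  rw [sum_pow_eq_factorial_nsmul_sum_powersetCard (fun s => he (s, i)), mul_smul_comm, mul_sum,
    sum_congr rfl hterm, sum_const, card_powersetCard, Finset.card_univ, smul_smul, smul_smul,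
    ← descFactorial_eq_factorial_mul_choose]

theorem sum_pow_mul_sq_sum_column_mul_sq_sum_column (he : ∀ a, e a * e a = 0) {p : ℕ}
    (hp : p + 4 = Fintype.card σ * Fintype.card κ) {i j : κ} (hij : i ≠ j) :
    (∑ a, e a) ^ p * ((∑ s, e (s, i)) ^ 2 * (∑ s, e (s, j)) ^ 2)
      = ((Fintype.card σ).descFactorial 2 ^ 2 * p !) • ∏ a, e a := by
  classical
  have hterm : ∀ U ∈ univ.powersetCard 2, ∀ W ∈ univ.powersetCard 2,
      (∑ a, e a) ^ p * ((∏ s ∈ U, e (s, i)) * ∏ s ∈ W, e (s, j)) = p ! • ∏ a, e a := by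
    intro U hU W hW
    have hdisj : Disjoint (U.map (Function.Embedding.sectL σ i))
        (W.map (Function.Embedding.sectL σ j)) := by
      simp [disjoint_left, hij.symm]
    rw [prod_eq_prod_map_sectL, prod_eq_prod_map_sectL, ← prod_union hdisj]
    refine sum_pow_mul_prod_eq_factorial_nsmul_prod he ?_
    rw [card_union_of_disjoint hdisj, card_map, card_map, (mem_powersetCard.1 hU).2,
      (mem_powersetCard.1 hW).2, hp, Fintype.card_prod]
  rw [sum_pow_eq_factorial_nsmul_sum_powersetCard (fun s => he (s, i)),
    sum_pow_eq_factorial_nsmul_sum_powersetCard (fun s => he (s, j)), smul_mul_smul_comm,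
    sum_mul_sum, mul_smul_comm, mul_sum,
    sum_congr rfl fun U hU => (mul_sum _ _ _).trans (sum_congr rfl (hterm U hU)), sum_const,
    sum_const, card_powersetCard, Finset.card_univ, smul_smul, smul_smul, smul_smul,
    descFactorial_eq_factorial_mul_choose]
  congr 1
  ring

theorem sum_sum_sum_pow_mul_columns [DecidableEq κ] (he : ∀ a, e a * e a = 0) {p : ℕ}
    (hp : p + 4 = Fintype.card σ * Fintype.card κ) :
    ∑ i, ∑ j, (∑ a, e a) ^ p * (∑ s, e (s, i)) * (∑ s, e (s, i)) * (∑ s, e (s, j)) *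
        (∑ s, e (s, j))
      = (Fintype.card κ * ((Fintype.card σ).descFactorial 4
          + (Fintype.card κ - 1) * (Fintype.card σ).descFactorial 2 ^ 2) * p !) • ∏ a, e a := by
  have hdiag : ∀ i, (∑ a, e a) ^ p * (∑ s, e (s, i)) * (∑ s, e (s, i)) * (∑ s, e (s, i)) *
      (∑ s, e (s, i)) = ((Fintype.card σ).descFactorial 4 * p !) • ∏ a, e a := fun i => by
    rw [← sum_pow_mul_sum_column_pow_four he hp i]; ring
  have hoff : ∀ i j, i ≠ j → (∑ a, e a) ^ p * (∑ s, e (s, i)) * (∑ s, e (s, i)) *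
      (∑ s, e (s, j)) * (∑ s, e (s, j))
        = ((Fintype.card σ).descFactorial 2 ^ 2 * p !) • ∏ a, e a := fun i j hij => by
    rw [← sum_pow_mul_sq_sum_column_mul_sq_sum_column he hp hij]; ring
  calc _ = ∑ i : κ, (((Fintype.card σ).descFactorial 4 * p !) • ∏ a, e a
          + ∑ j ∈ univ.erase i, ((Fintype.card σ).descFactorial 2 ^ 2 * p !) • ∏ a, e a) := by
        refine sum_congr rfl fun i _ => ?_
        rw [← add_sum_erase _ _ (mem_univ i), hdiag]
        exact congrArg _ (sum_congr rfl fun j hj => hoff i j (ne_of_mem_erase hj).symm)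
    _ = _ := by
        simp only [sum_const, card_erase_of_mem (mem_univ _), Finset.card_univ, smul_smul,
          ← add_smul]
        congr 1
        ring

end Columns

theorem Nat.cast_descFactorial_four (S : Type*) [Ring S] (a : ℕ) :
    (a.descFactorial 4 : S) = a * (a - 1) * (a - 2) * (a - 3) := by
  rw [← descPochhammer_eval_eq_descFactorial S a 4]
  simp [descPochhammer_succ_eval, mul_assoc]

namespace ExteriorAlgebra

variable {R M : Type*} [CommRing R] [AddCommGroup M] [Module R M]

theorem commute_ι_mul_ι (x y z : M) : Commute (ι R x * ι R y) (ι R z) := by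
  have hswap : ∀ u v : M, ι R u * ι R v = -(ι R v * ι R u) := fun u v =>
    eq_neg_of_add_eq_zero_left (ι_add_mul_swap u v)
  rw [Commute, SemiconjBy, mul_assoc, hswap y z, mul_neg, ← mul_assoc, hswap x z, neg_mul,
    neg_neg, mul_assoc]

theorem ι_mul_ι_mul_self (x y : M) : (ι R x * ι R y) * (ι R x * ι R y) = 0 := by
  rw [← mul_assoc, (commute_ι_mul_ι x y x).eq, ← mul_assoc, ι_sq_zero, zero_mul, zero_mul]

end ExteriorAlgebra

open scoped IsMulCommutative

def pairProd (k n : ℕ) (a : Fin n × Fin k) : ExteriorAlgebra ℝ (V k n) :=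
  ψ k n a.1 a.2 * ψb k n a.1 a.2

instance (k n : ℕ) : IsMulCommutative (Algebra.adjoin ℝ (Set.range (pairProd k n))) :=
  Algebra.isMulCommutative_adjoin ℝ <| by
    rintro _ ⟨a, rfl⟩ _ ⟨b, rfl⟩
    exact ((ExteriorAlgebra.commute_ι_mul_ι _ _ _).mul_right
      (ExteriorAlgebra.commute_ι_mul_ι _ _ _)).eq

def pairGen (k n : ℕ) (a : Fin n × Fin k) : Algebra.adjoin ℝ (Set.range (pairProd k n)) :=
  ⟨pairProd k n a, Algebra.subset_adjoin ⟨a, rfl⟩⟩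

theorem pairGen_mul_self (k n : ℕ) (a : Fin n × Fin k) : pairGen k n a * pairGen k n a = 0 :=
  Subtype.ext (ExteriorAlgebra.ι_mul_ι_mul_self _ _)

theorem trPhi_eq_sum_pairProd (k n : ℕ) : trPhi k n = ∑ a, pairProd k n a := by
  rw [trPhi, Fintype.sum_prod_type, Finset.sum_comm]
  rfl

theorem T_eq_coe_prod_pairGen (k n : ℕ) : T k n = ↑(∏ a, pairGen k n a) := by
  simp only [T, Fintype.prod_prod_type, Fin.prod_univ_def, SubmonoidClass.coe_list_prod,
    List.map_map, Function.comp_def]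
  rfl

theorem Q1_eval_general (k n : ℕ) (hk : 1 ≤ k) (hkn : 4 ≤ k * n) :
    (∑ i : Fin k, ∑ j : Fin k,
        (trPhi k n) ^ (k * n - 4) * ω k n i i * ω k n i i * ω k n j j * ω k n j j) =
      (((k * n - 4).factorial : ℝ) * (k : ℝ) * (n : ℝ) *
        (((n : ℝ) - 1) * ((n : ℝ) - 2) * ((n : ℝ) - 3)
          + ((k : ℝ) - 1) * (n : ℝ) * ((n : ℝ) - 1) ^ 2)) • T k n := by
  have hp : k * n - 4 + 4 = Fintype.card (Fin n) * Fintype.card (Fin k) := by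
    rw [Fintype.card_fin, Fintype.card_fin, mul_comm n]; omega
  have key := congrArg (Algebra.adjoin ℝ (Set.range (pairProd k n))).val
    (sum_sum_sum_pow_mul_columns (pairGen_mul_self k n) hp)
  simp only [map_sum, map_mul, map_pow, map_nsmul] at key
  rw [trPhi_eq_sum_pairProd, T_eq_coe_prod_pairGen]
  refine key.trans ?_
  rw [← Nat.cast_smul_eq_nsmul ℝ]
  congr 1
  push_cast [Fintype.card_fin, Nat.cast_sub hk, Nat.cast_descFactorial_four,
    Nat.cast_descFactorial_two]
  ring

/-- `∑_{i,j} (tr Φ)^{kn−4} ∧ ω^{ii} ∧ ω^{ii} ∧ ω^{jj} ∧ ω^{jj}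
  = (kn−4)! · k · n · [(n−1)(n−2)(n−3) + (k−1)n(n−1)²] · T` (the term `Q₁`). -/
theorem Q1_eval (k N n : ℕ) (hk : 1 ≤ k) (hN : k < N) (hn : n = N - k)
    (hkn : 4 ≤ k * n) :
    (∑ i : Fin k, ∑ j : Fin k,
        (trPhi k n) ^ (k * n - 4) * ω k n i i * ω k n i i * ω k n j j * ω k n j j) =
      (((k * n - 4).factorial : ℝ) * (k : ℝ) * (n : ℝ) *
        (((n : ℝ) - 1) * ((n : ℝ) - 2) * ((n : ℝ) - 3)
          + ((k : ℝ) - 1) * (n : ℝ) * ((n : ℝ) - 1) ^ 2)) • T k n :=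
  Q1_eval_general k n hk hkn
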